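/- Let X ⊆ ℝ^d be convex, let f : ℝ^d → ℝ be convex and differentiable, let y ∈ X with ‖∇f(y)‖ ≤ F for some F ≥ 0, let Q ∈ ℝ^m with Q_i ≥ 0 for all i, let ĝ : ℝ^d → ℝ^m have every component function convex, and let V > 0, η > 0. Define the linearization f̂(u) = f(y) + ⟨∇f(y), u − y⟩, and let z ∈ X be a minimizer over X of the surrogate u ↦ V f̂(u) + ⟨Q, ĝ(u)⟩ + (1/(2η)) ‖u − y‖². Then for every x ∈ X: V (f(y) − f(x)) + ⟨Q, ĝ(z)⟩ ≤ ⟨Q, ĝ(x)⟩ + (1/(2η)) (‖x − y‖² − ‖x − z‖²) + (η V² F²)/2. -/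

import Mathlib

open scoped RealInnerProductSpace

lemma grad_ineq {d : ℕ} {f : EuclideanSpace ℝ (Fin d) → ℝ}
    (hf : ConvexOn ℝ Set.univ f) {y g : EuclideanSpace ℝ (Fin d)}
    (hg : HasGradientAt f g y) (x : EuclideanSpace ℝ (Fin d)) :
    f y + ⟪g, x - y⟫ ≤ f x := by
  have hc : HasDerivAt (fun t : ℝ => y + t • (x - y)) (x - y) 0 := by
    simpa using ((hasDerivAt_id (0 : ℝ)).smul_const (x - y)).const_add y
  have hc0 : (fun t : ℝ => y + t • (x - y)) 0 = y := by simp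
  have hφd : HasDerivAt (fun t : ℝ => f (y + t • (x - y))) ⟪g, x - y⟫ 0 := by
    have := (hc0 ▸ hg.hasFDerivAt).comp_hasDerivAt 0 hc
    simp at this; exact this
  have hφc : ConvexOn ℝ Set.univ (fun t : ℝ => f (y + t • (x - y))) := by
    have := hf.comp_affineMap (AffineMap.lineMap y x)
    simp only [Set.preimage_univ] at this
    have he : (f ∘ ⇑(AffineMap.lineMap y x)) = fun t : ℝ => f (y + t • (x - y)) := by
      funext t
      simp [AffineMap.lineMap_apply, vsub_eq_sub, vadd_eq_add, add_comm]
    rwa [he] at this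
  have := hφc.le_slope_of_hasDerivAt (Set.mem_univ (0:ℝ)) (Set.mem_univ 1)
    one_pos hφd
  have h1 : y + (1:ℝ) • (x - y) = x := by simp
  have h0 : y + (0:ℝ) • (x - y) = y := by simp
  rw [slope_def_field, h1, h0] at this
  rw [sub_zero, div_one] at this
  linarith

lemma expand_sq {d : ℕ} (a b : EuclideanSpace ℝ (Fin d)) (s : ℝ) :
    ‖(1-s) • a + s • b‖ ^ 2 =
      (1-s) * ‖a‖ ^ 2 + s * ‖b‖ ^ 2 - s * (1-s) * ‖b - a‖ ^ 2 := by
  rw [norm_add_sq_real, norm_sub_sq_real, real_inner_smul_left, real_inner_smul_right,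
      norm_smul, norm_smul, mul_pow, mul_pow, Real.norm_eq_abs, Real.norm_eq_abs,
      sq_abs, sq_abs, real_inner_comm b a]
  ring

/-- deterministic core of the key "regret + Lyapunov drift" lemma for the
SELO primal update. If `z ∈ X` minimizes the surrogate
`u ↦ V f̂(u) + ⟨Q, ĝ(u)⟩ + (1/(2η))‖u - y‖²` over the convex set `X`, where
`f̂(u) = f(y) + ⟨∇f(y), u - y⟩`, then for every `x ∈ X`:
`V (f(y) - f(x)) + ⟨Q, ĝ(z)⟩ ≤ ⟨Q, ĝ(x)⟩ + (1/(2η))(‖x - y‖² - ‖x - z‖²) + ηV²F²/2`. -/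
theorem selo_primal_key_inequality {d m : ℕ}
    (X : Set (EuclideanSpace ℝ (Fin d))) (hX : Convex ℝ X)
    (f : EuclideanSpace ℝ (Fin d) → ℝ) (hf : ConvexOn ℝ Set.univ f)
    (hdiff : Differentiable ℝ f)
    (y : EuclideanSpace ℝ (Fin d)) (hy : y ∈ X)
    (g : EuclideanSpace ℝ (Fin d)) (hg : HasGradientAt f g y)
    (F : ℝ) (hF : 0 ≤ F) (hgF : ‖g‖ ≤ F)
    (Q : EuclideanSpace ℝ (Fin m)) (hQ : ∀ i, 0 ≤ Q i)
    (ghat : EuclideanSpace ℝ (Fin d) → EuclideanSpace ℝ (Fin m))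
    (hghat : ∀ i, ConvexOn ℝ Set.univ (fun u => ghat u i))
    (V η : ℝ) (hV : 0 < V) (hη : 0 < η)
    (z : EuclideanSpace ℝ (Fin d)) (hz : z ∈ X)
    (hmin : ∀ x ∈ X,
      V * (f y + ⟪g, z - y⟫) + ⟪Q, ghat z⟫ + (1 / (2 * η)) * ‖z - y‖ ^ 2 ≤
        V * (f y + ⟪g, x - y⟫) + ⟪Q, ghat x⟫ + (1 / (2 * η)) * ‖x - y‖ ^ 2) :
    ∀ x ∈ X,
      V * (f y - f x) + ⟪Q, ghat z⟫ ≤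
        ⟪Q, ghat x⟫ + (1 / (2 * η)) * (‖x - y‖ ^ 2 - ‖x - z‖ ^ 2) +
          η * V ^ 2 * F ^ 2 / 2 := by
  intro x hx
  set c : ℝ := 1 / (2 * η) with hc_def
  -- three-point inequality for each t ∈ (0,1)
  have key : ∀ t ∈ Set.Ioo (0:ℝ) 1,
      V * ⟪g, z - y⟫ + ⟪Q, ghat z⟫ + c * ‖z - y‖ ^ 2 + c * (1 - t) * ‖x - z‖ ^ 2 ≤
        V * ⟪g, x - y⟫ + ⟪Q, ghat x⟫ + c * ‖x - y‖ ^ 2 := by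
    intro t ht
    obtain ⟨ht0, ht1⟩ := ht
    set w : EuclideanSpace ℝ (Fin d) := (1 - t) • z + t • x with hw_def
    have hw : w ∈ X := hX hz hx (by linarith) ht0.le (by ring)
    have hm := hmin w hw
    have hwy : w - y = (1 - t) • (z - y) + t • (x - y) := by
      rw [hw_def]; module
    have hinner : ⟪g, w - y⟫ = (1-t) * ⟪g, z - y⟫ + t * ⟪g, x - y⟫ := by
      rw [hwy, inner_add_right, real_inner_smul_right, real_inner_smul_right]
    have hnorm : ‖w - y‖ ^ 2 =
        (1-t) * ‖z - y‖ ^ 2 + t * ‖x - y‖ ^ 2 - t * (1-t) * ‖x - z‖ ^ 2 := by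
      rw [hwy, expand_sq, show x - y - (z - y) = x - z from by abel]
    have hgc : ⟪Q, ghat w⟫ ≤ (1-t) * ⟪Q, ghat z⟫ + t * ⟪Q, ghat x⟫ := by
      simp only [PiLp.inner_apply, RCLike.inner_apply, conj_trivial]
      have hcomm : ∀ u, ∑ i, (ghat u) i * Q i = ∑ i, Q i * ghat u i :=
        fun u => Finset.sum_congr rfl (fun i _ => mul_comm _ _)
      simp only [hcomm]
      calc ∑ i, Q i * ghat w i
          ≤ ∑ i, ((1-t) * (Q i * ghat z i) + t * (Q i * ghat x i)) := by
            apply Finset.sum_le_sum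
            intro i _
            have hcv := (hghat i).2 (Set.mem_univ z) (Set.mem_univ x)
              (by linarith : (0:ℝ) ≤ 1 - t) ht0.le (by ring)
            simp only [smul_eq_mul] at hcv
            nlinarith [hQ i, hcv]
        _ = (1-t) * ∑ i, Q i * ghat z i + t * ∑ i, Q i * ghat x i := by
            rw [Finset.sum_add_distrib, ← Finset.mul_sum, ← Finset.mul_sum]
    rw [hinner, hnorm] at hm
    have h3 : t * (V * ⟪g, z - y⟫ + ⟪Q, ghat z⟫ + c * ‖z - y‖ ^ 2
          + c * (1 - t) * ‖x - z‖ ^ 2) ≤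
        t * (V * ⟪g, x - y⟫ + ⟪Q, ghat x⟫ + c * ‖x - y‖ ^ 2) := by
      nlinarith [hm, hgc]
    exact le_of_mul_le_mul_left h3 ht0
  -- take the limit t → 0⁺
  set A : ℝ := V * ⟪g, z - y⟫ + ⟪Q, ghat z⟫ + c * ‖z - y‖ ^ 2 with hA
  set B : ℝ := V * ⟪g, x - y⟫ + ⟪Q, ghat x⟫ + c * ‖x - y‖ ^ 2 with hB
  set K : ℝ := ‖x - z‖ ^ 2 with hK
  have hlim : Filter.Tendsto (fun t : ℝ => A + c * (1 - t) * K)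
      (nhdsWithin 0 (Set.Ioi 0)) (nhds (A + c * (1 - 0) * K)) :=
    ((by fun_prop : Continuous fun t : ℝ => A + c * (1 - t) * K).tendsto 0).mono_left
      nhdsWithin_le_nhds
  have hev : ∀ᶠ t in nhdsWithin (0:ℝ) (Set.Ioi 0), A + c * (1 - t) * K ≤ B :=
    Filter.eventually_of_mem
      (Ioo_mem_nhdsGT_of_mem (by norm_num : (0:ℝ) ∈ Set.Ico (0:ℝ) 1))
      (fun t ht => key t ht)
  have key0 : A + c * (1 - 0) * K ≤ B := le_of_tendsto hlim hev
  rw [sub_zero, mul_one] at key0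
  -- combine with gradient inequality and Cauchy–Schwarz / AM-GM
  have hgr := grad_ineq hf hg x
  have hVgrad : V * (f y - f x) ≤ -(V * ⟪g, x - y⟫) := by nlinarith [hgr]
  have h4 : -⟪g, z - y⟫ ≤ ‖g‖ * ‖z - y‖ := by
    have h := real_inner_le_norm g (y - z)
    rw [show y - z = -(z - y) from by abel, inner_neg_right, norm_neg] at h
    linarith
  have hcs' : V * (-⟪g, z - y⟫) ≤ V * (F * ‖z - y‖) :=
    mul_le_mul_of_nonneg_left (by nlinarith [norm_nonneg (z - y)]) hV.le
  have hamgm : V * (F * ‖z - y‖) ≤ η * V ^ 2 * F ^ 2 / 2 + c * ‖z - y‖ ^ 2 := by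
    have h2η : (0:ℝ) < 2 * η := by linarith
    rw [hc_def]
    have hrw : η * V ^ 2 * F ^ 2 / 2 + 1 / (2 * η) * ‖z - y‖ ^ 2
        = (η ^ 2 * V ^ 2 * F ^ 2 + ‖z - y‖ ^ 2) / (2 * η) := by field_simp
    rw [hrw, le_div_iff₀ h2η]
    nlinarith [sq_nonneg (η * V * F - ‖z - y‖)]
  linarith [hVgrad, key0, hcs', hamgm]
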